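/- arXiv:1910.01947 — 2 statements merged into one kernel-verified Lean document; each statement's English description precedes it below -/
import Mathlib

section
/- Let G be a finite simple graph with vertex set V, and let A₁, C₁, A₂, C₂ be subsets of V such that Aᵢ ⊆ Cᵢ ⊆ V \ Aⱼ for {i,j} = {1,2}, V = C₁ ∪ C₂, and Cᵢ = C(Aᵢ, Cᵢ) for i = 1,2. Then the following are equivalent: (1) for each i, Cᵢ = C(Aᵢ, V \ Aⱼ); (2) both of the following hold: (a) for each i, the set C₁ ∩ C₂ is a (possibly empty) union of connected components of the induced subgraph of G on Cᵢ \ Aᵢ, and (b) whenever a vertex x ∈ C₁ \ C₂ is adjacent in G to a vertex y ∈ C₂ \ C₁, one has x ∈ A₁ and y ∈ A₂. -/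
/-- `reachIn G T x y` : there is a walk in `G` from `x` to `y` all of whose
vertices lie in `T`. -/
def reachIn {V : Type*} (G : SimpleGraph V) (T : Set V) (x y : V) : Prop :=
  ∃ w : G.Walk x y, ∀ v ∈ w.support, v ∈ T

/-- The connected closure `C(A, T)` of `A` in `T`: the set of vertices joined to
some vertex of `A` by a walk of `G` all of whose vertices lie in `T`. -/
def connClosure {V : Type*} (G : SimpleGraph V) (A T : Set V) : Set V :=
  {x | ∃ a ∈ A, reachIn G T a x}

lemma reachIn_mono {V : Type*} {G : SimpleGraph V} {T T' : Set V} {x y : V}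
    (h : T ⊆ T') (hr : reachIn G T x y) : reachIn G T' x y := by
  obtain ⟨w, hw⟩ := hr
  exact ⟨w, fun v hv => h (hw v hv)⟩

lemma reachIn_trans {V : Type*} {G : SimpleGraph V} {T : Set V} {x y z : V}
    (h1 : reachIn G T x y) (h2 : reachIn G T y z) : reachIn G T x z := by
  obtain ⟨w1, hw1⟩ := h1
  obtain ⟨w2, hw2⟩ := h2
  refine ⟨w1.append w2, fun v hv => ?_⟩
  rcases (SimpleGraph.Walk.mem_support_append_iff _ _).1 hv with h | h
  · exact hw1 v h
  · exact hw2 v h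

lemma reachIn_concat {V : Type*} {G : SimpleGraph V} {T : Set V} {x y z : V}
    (h1 : reachIn G T x y) (hadj : G.Adj y z) (hz : z ∈ T) : reachIn G T x z := by
  obtain ⟨w, hw⟩ := h1
  refine ⟨w.concat hadj, fun v hv => ?_⟩
  rw [SimpleGraph.Walk.support_concat, List.mem_append] at hv
  rcases hv with h | h
  · exact hw v h
  · simp at h; subst h; exact hz

lemma connClosure_mono {V : Type*} {G : SimpleGraph V} {A T T' : Set V}
    (h : T ⊆ T') : connClosure G A T ⊆ connClosure G A T' := by
  rintro x ⟨a, ha, hr⟩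
  exact ⟨a, ha, reachIn_mono h hr⟩

theorem stmt0 {V : Type*} [Fintype V] (G : SimpleGraph V)
    (A₁ C₁ A₂ C₂ : Set V)
    (hA₁ : A₁ ⊆ C₁) (hC₁ : C₁ ⊆ Set.univ \ A₂)
    (hA₂ : A₂ ⊆ C₂) (hC₂ : C₂ ⊆ Set.univ \ A₁)
    (hV : C₁ ∪ C₂ = Set.univ)
    (hcc₁ : connClosure G A₁ C₁ = C₁) (hcc₂ : connClosure G A₂ C₂ = C₂) :
    (connClosure G A₁ (Set.univ \ A₂) = C₁ ∧
     connClosure G A₂ (Set.univ \ A₁) = C₂)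
    ↔
    ((∀ x ∈ C₁ ∩ C₂, ∀ y, reachIn G (C₁ \ A₁) x y → y ∈ C₁ ∩ C₂) ∧
     (∀ x ∈ C₁ ∩ C₂, ∀ y, reachIn G (C₂ \ A₂) x y → y ∈ C₁ ∩ C₂) ∧
     (∀ x ∈ C₁ \ C₂, ∀ y ∈ C₂ \ C₁, G.Adj x y → x ∈ A₁ ∧ y ∈ A₂)) := by
  have hAll : ∀ v : V, v ∈ C₁ ∨ v ∈ C₂ := by
    intro v
    have : v ∈ C₁ ∪ C₂ := hV ▸ Set.mem_univ v
    exact this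
  constructor
  · rintro ⟨h1, h2⟩
    refine ⟨?_, ?_, ?_⟩
    · rintro x ⟨hx1, hx2⟩ y hxy
      have hyC1 : y ∈ C₁ := by
        obtain ⟨w, hw⟩ := hxy
        exact (hw y w.end_mem_support).1
      have hyC2 : y ∈ C₂ := by
        rw [← h2]
        have hx' : x ∈ connClosure G A₂ (Set.univ \ A₁) := h2 ▸ hx2
        obtain ⟨a, ha, har⟩ := hx'
        exact ⟨a, ha, reachIn_trans har
          (reachIn_mono (fun v hv => ⟨Set.mem_univ v, hv.2⟩) hxy)⟩
      exact ⟨hyC1, hyC2⟩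
    · rintro x ⟨hx1, hx2⟩ y hxy
      have hyC2 : y ∈ C₂ := by
        obtain ⟨w, hw⟩ := hxy
        exact (hw y w.end_mem_support).1
      have hyC1 : y ∈ C₁ := by
        rw [← h1]
        have hx' : x ∈ connClosure G A₁ (Set.univ \ A₂) := h1 ▸ hx1
        obtain ⟨a, ha, har⟩ := hx'
        exact ⟨a, ha, reachIn_trans har
          (reachIn_mono (fun v hv => ⟨Set.mem_univ v, hv.2⟩) hxy)⟩
      exact ⟨hyC1, hyC2⟩
    · rintro x ⟨hx1, hx2⟩ y ⟨hy2, hy1⟩ hadj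
      constructor
      · by_contra hxA
        have hy' : y ∈ connClosure G A₂ (Set.univ \ A₁) := h2 ▸ hy2
        obtain ⟨a, ha, har⟩ := hy'
        have : x ∈ connClosure G A₂ (Set.univ \ A₁) :=
          ⟨a, ha, reachIn_concat har hadj.symm ⟨Set.mem_univ x, hxA⟩⟩
        rw [h2] at this
        exact hx2 this
      · by_contra hyA
        have hx' : x ∈ connClosure G A₁ (Set.univ \ A₂) := h1 ▸ hx1
        obtain ⟨a, ha, har⟩ := hx'
        have : y ∈ connClosure G A₁ (Set.univ \ A₂) :=
          ⟨a, ha, reachIn_concat har hadj ⟨Set.mem_univ y, hyA⟩⟩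
        rw [h1] at this
        exact hy1 this
  · rintro ⟨ha1, ha2, hb⟩
    have step1 : ∀ u v : V, u ∈ C₁ → v ∉ A₂ → G.Adj u v → v ∈ C₁ := by
      intro u v hu hvA hadj
      by_contra hvC
      have hvC2 : v ∈ C₂ := (hAll v).resolve_left hvC
      rcases hAll u with _ | huC2
      · by_cases huC2 : u ∈ C₂
        · have : v ∈ C₁ ∩ C₂ := ha2 u ⟨hu, huC2⟩ v
            ⟨SimpleGraph.Walk.cons hadj SimpleGraph.Walk.nil, by
              intro w hw
              simp [SimpleGraph.Walk.support_cons] at hw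
              rcases hw with rfl | rfl
              · exact ⟨huC2, (hC₁ hu).2⟩
              · exact ⟨hvC2, hvA⟩⟩
          exact hvC this.1
        · exact hvA (hb u ⟨hu, huC2⟩ v ⟨hvC2, hvC⟩ hadj).2
      · by_cases huC2 : u ∈ C₂
        · have : v ∈ C₁ ∩ C₂ := ha2 u ⟨hu, huC2⟩ v
            ⟨SimpleGraph.Walk.cons hadj SimpleGraph.Walk.nil, by
              intro w hw
              simp [SimpleGraph.Walk.support_cons] at hw
              rcases hw with rfl | rfl
              · exact ⟨huC2, (hC₁ hu).2⟩
              · exact ⟨hvC2, hvA⟩⟩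
          exact hvC this.1
        · exact hvA (hb u ⟨hu, huC2⟩ v ⟨hvC2, hvC⟩ hadj).2
    have step2 : ∀ u v : V, u ∈ C₂ → v ∉ A₁ → G.Adj u v → v ∈ C₂ := by
      intro u v hu hvA hadj
      by_contra hvC
      have hvC1 : v ∈ C₁ := (hAll v).resolve_right hvC
      by_cases huC1 : u ∈ C₁
      · have : v ∈ C₁ ∩ C₂ := ha1 u ⟨huC1, hu⟩ v
          ⟨SimpleGraph.Walk.cons hadj SimpleGraph.Walk.nil, by
            intro w hw
            simp [SimpleGraph.Walk.support_cons] at hw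
            rcases hw with rfl | rfl
            · exact ⟨huC1, (hC₂ hu).2⟩
            · exact ⟨hvC1, hvA⟩⟩
        exact hvC this.2
      · exact hvA (hb v ⟨hvC1, hvC⟩ u ⟨hu, huC1⟩ hadj.symm).1
    have key1 : ∀ {a x : V} (w : G.Walk a x),
        (∀ v ∈ w.support, v ∈ Set.univ \ A₂) → a ∈ C₁ → x ∈ C₁ := by
      intro a x w
      induction w with
      | nil => exact fun _ h => h
      | cons h p ih =>
        intro hsup ha
        refine ih (fun v hv => hsup v (by simp [hv])) ?_
        exact step1 _ _ ha (hsup _ (by simp)).2 h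
    have key2 : ∀ {a x : V} (w : G.Walk a x),
        (∀ v ∈ w.support, v ∈ Set.univ \ A₁) → a ∈ C₂ → x ∈ C₂ := by
      intro a x w
      induction w with
      | nil => exact fun _ h => h
      | cons h p ih =>
        intro hsup ha
        refine ih (fun v hv => hsup v (by simp [hv])) ?_
        exact step2 _ _ ha (hsup _ (by simp)).2 h
    constructor
    · apply Set.Subset.antisymm
      · rintro x ⟨a, ha, w, hw⟩
        exact key1 w hw (hA₁ ha)
      · rw [← hcc₁]
        exact connClosure_mono hC₁
    · apply Set.Subset.antisymm
      · rintro x ⟨a, ha, w, hw⟩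
        exact key2 w hw (hA₂ ha)
      · rw [← hcc₂]
        exact connClosure_mono hC₂
end

section
/- Let G be a finite simple graph with vertex set V, and let A and B be disjoint subsets of V such that every connected component of G contains a vertex of A ∪ B. Then V = C(A, V \ B) ∪ C(B, V \ A). -/
private lemma step_aux {V : Type*} (G : SimpleGraph V) (A B : Set V)
    (hdisj : Disjoint A B) {x y : V}
    (hx : x ∈ connClosure G A (Set.univ \ B) ∪ connClosure G B (Set.univ \ A))
    (hxy : G.Adj x y) :
    y ∈ connClosure G A (Set.univ \ B) ∪ connClosure G B (Set.univ \ A) := by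
  rcases hx with ⟨a, ha, w, hw⟩ | ⟨b, hb, w, hw⟩
  · by_cases hyB : y ∈ B
    · right
      refine ⟨y, hyB, SimpleGraph.Walk.nil, ?_⟩
      intro v hv
      simp only [SimpleGraph.Walk.support_nil, List.mem_singleton] at hv
      subst hv
      exact ⟨trivial, fun hA => Set.disjoint_left.mp hdisj hA hyB⟩
    · left
      refine ⟨a, ha, w.concat hxy, ?_⟩
      intro v hv
      rw [SimpleGraph.Walk.support_concat, List.mem_append,
        List.mem_singleton] at hv
      rcases hv with hv | rfl
      · exact hw v hv
      · exact ⟨trivial, hyB⟩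
  · by_cases hyA : y ∈ A
    · left
      refine ⟨y, hyA, SimpleGraph.Walk.nil, ?_⟩
      intro v hv
      simp only [SimpleGraph.Walk.support_nil, List.mem_singleton] at hv
      subst hv
      exact ⟨trivial, Set.disjoint_left.mp hdisj hyA⟩
    · right
      refine ⟨b, hb, w.concat hxy, ?_⟩
      intro v hv
      rw [SimpleGraph.Walk.support_concat, List.mem_append,
        List.mem_singleton] at hv
      rcases hv with hv | rfl
      · exact hw v hv
      · exact ⟨trivial, hyA⟩

private lemma walk_aux {V : Type*} (G : SimpleGraph V) (A B : Set V)
    (hdisj : Disjoint A B) :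
    ∀ {a x : V}, G.Walk a x →
      a ∈ connClosure G A (Set.univ \ B) ∪ connClosure G B (Set.univ \ A) →
      x ∈ connClosure G A (Set.univ \ B) ∪ connClosure G B (Set.univ \ A) := by
  intro a x w
  induction w with
  | nil => exact id
  | cons h p ih => exact fun ha => ih (step_aux G A B hdisj ha h)

theorem stmt3 {V : Type*} [Fintype V] (G : SimpleGraph V)
    (A B : Set V) (hdisj : Disjoint A B)
    (hmeet : ∀ x : V, ∃ a ∈ A ∪ B, G.Reachable a x) :
    Set.univ = connClosure G A (Set.univ \ B) ∪ connClosure G B (Set.univ \ A) := by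
  ext x
  simp only [Set.mem_univ, true_iff]
  obtain ⟨a, ha, hr⟩ := hmeet x
  obtain ⟨w⟩ := hr
  refine walk_aux G A B hdisj w ?_
  rcases ha with hA | hB
  · left
    refine ⟨a, hA, SimpleGraph.Walk.nil, ?_⟩
    intro v hv
    simp only [SimpleGraph.Walk.support_nil, List.mem_singleton] at hv
    subst hv
    exact ⟨trivial, Set.disjoint_left.mp hdisj hA⟩
  · right
    refine ⟨a, hB, SimpleGraph.Walk.nil, ?_⟩
    intro v hv
    simp only [SimpleGraph.Walk.support_nil, List.mem_singleton] at hv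
    subst hv
    exact ⟨trivial, fun hA => Set.disjoint_left.mp hdisj hA hB⟩
end
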